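/- arXiv:2108.03650 — 2 statements merged into one kernel-verified Lean document; each statement's English description precedes it below -/
import Mathlib

section
/- Let ξ ∈ (-6, 6) be a real number and define θ'(z) = (1/2)(3(z² + z⁻⁴) + (ξ+3)(z⁻² + 1)) for z ≠ 0. Then θ'(z) has no zeros on the real axis ℝ \ {0}. -/
/-- For `ξ ∈ (-6, 6)`, the derivative of the phase function,
`θ'(z) = (1/2)(3(z² + z⁻⁴) + (ξ+3)(z⁻² + 1))`, has no zeros on `ℝ \ {0}`. -/
theorem mkdv_no_real_stationary_points
    (ξ : ℝ) (hξ₁ : -6 < ξ) (hξ₂ : ξ < 6) (z : ℝ) (hz : z ≠ 0) :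
    (1 / 2) * (3 * (z ^ 2 + (z ^ 4)⁻¹) + (ξ + 3) * ((z ^ 2)⁻¹ + 1)) ≠ 0 := by
  intro h
  have ht : (0:ℝ) < z ^ 2 := by positivity
  field_simp at h
  nlinarith [sq_nonneg (z^2 - 1), sq_nonneg (z^3 - z), sq_nonneg z, mul_pos ht ht,
    mul_pos (mul_pos ht ht) ht, sq_nonneg (z^2 + 1)]
end

section
/- Let ξ ∈ (-6, -2) and t > 0. Define θ(z) = ζ(z)(ξ + 4λ(z)² + 2) with λ(z) = (z + 1/z)/2, ζ(z) = (z - 1/z)/2, and F(s) = s + 1/s. Let φ(ξ) = min{θ₀, (1/2) arccos((-4 - 6ξ - |ξ+4|)/12)} for some fixed θ₀ > 0 sufficiently small. Then for every z = |z|e^{iω} with 0 < ω < φ(ξ), we have Re(2itθ(z)) ≤ -(1/6) F(|z|)² t sin(ω) (2 - |ξ+4|). -/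
open Complex


private lemma re_key_aux (R ω t ξ : ℝ) (hR : 0 < R) :
    (2 * I * t * (((R : ℂ) * Complex.exp (I * ω) - ((R : ℂ) * Complex.exp (I * ω))⁻¹) / 2 *
        ((ξ : ℂ) + 4 * ((((R : ℂ) * Complex.exp (I * ω)) +
          ((R : ℂ) * Complex.exp (I * ω))⁻¹) / 2) ^ 2 + 2))).re
      = -(t * (R + 1/R) * Real.sin ω * (2*(R - 1/R)^2*Real.cos ω^2 + ξ + 2
          + (R + 1/R)^2*Real.cos ω^2 - (R - 1/R)^2*Real.sin ω^2)) := by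
  have hc2 : Real.cos ω ^ 2 + Real.sin ω ^ 2 = 1 := Real.cos_sq_add_sin_sq ω
  have hz : (R:ℂ) * Complex.exp (I * ω) = (R:ℂ) * (↑(Real.cos ω) + ↑(Real.sin ω) * I) := by
    rw [mul_comm I, Complex.exp_mul_I]; push_cast; ring
  have hcC : (Real.cos ω : ℂ) ^ 2 + (Real.sin ω : ℂ) ^ 2 = 1 := by exact_mod_cast hc2
  have hRR : (R:ℂ) * ((R⁻¹:ℝ):ℂ) = 1 := by push_cast; field_simp [hR.ne']
  have hzinv : ((R:ℂ) * Complex.exp (I * ω))⁻¹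
      = ((R⁻¹:ℝ):ℂ) * (↑(Real.cos ω) - ↑(Real.sin ω) * I) := by
    rw [hz]
    apply inv_eq_of_mul_eq_one_right
    linear_combination (((Real.cos ω:ℂ))^2 - (Real.sin ω:ℂ)^2 * I^2) * hRR + hcC
      + (-(Real.sin ω:ℂ)^2) * Complex.I_sq
  rw [hzinv, hz]
  simp [Complex.mul_re, Complex.mul_im, Complex.add_re, Complex.add_im, Complex.sub_re,
    Complex.sub_im, Complex.div_re, Complex.div_im, Complex.I_re, Complex.I_im,
    Complex.ofReal_re, Complex.ofReal_im, Complex.normSq, pow_two,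
    Complex.cos_ofReal_re, Complex.sin_ofReal_re]
  field_simp
  ring

set_option maxHeartbeats 1000000 in
/-- Decay estimate in the sector `Ω₁`: for `ξ ∈ (-6,-2)`, `t > 0`, `θ₀ > 0`,
`φ(ξ) = min(θ₀, (1/2)arccos((-4 - 6ξ - |ξ+4|)/12))`, and `z = R e^{iω}` with
`0 < ω < φ(ξ)`, one has
`Re(2itθ(z)) ≤ -(1/6) F(R)² t sin ω (2 - |ξ+4|)` with `F(R) = R + 1/R`. -/
theorem re_two_I_t_theta_decay_Omega1
    (ξ t θ₀ : ℝ) (hξ₁ : -6 < ξ) (hξ₂ : ξ < -2) (ht : 0 < t) (hθ₀ : 0 < θ₀)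
    (R ω : ℝ) (hR : 0 < R) (hω₁ : 0 < ω)
    (hω₂ : ω < min θ₀ ((1 / 2) * Real.arccos ((-4 - 6 * ξ - |ξ + 4|) / 12))) :
    (2 * I * t * (((R : ℂ) * Complex.exp (I * ω) - ((R : ℂ) * Complex.exp (I * ω))⁻¹) / 2 *
        ((ξ : ℂ) + 4 * ((((R : ℂ) * Complex.exp (I * ω)) +
          ((R : ℂ) * Complex.exp (I * ω))⁻¹) / 2) ^ 2 + 2))).re ≤
      -(1 / 6) * (R + 1 / R) ^ 2 * t * Real.sin ω * (2 - |ξ + 4|) := by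
  set a : ℝ := |ξ + 4| with ha_def
  set X : ℝ := (-4 - 6 * ξ - a) / 12 with hX_def
  have ha0 : 0 ≤ a := abs_nonneg _
  have ha2 : a < 2 := abs_lt.mpr ⟨by linarith, by linarith⟩
  -- basic facts about ω
  have hω : ω < (1 / 2) * Real.arccos X := lt_of_lt_of_le hω₂ (min_le_right _ _)
  have harc_pos : 0 < Real.arccos X := by linarith
  have hX1 : X < 1 := Real.arccos_pos.mp harc_pos
  have hωpi : 2 * ω < Real.pi := by
    have := Real.arccos_le_pi X
    linarith
  have hpi : 0 < Real.pi := Real.pi_pos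
  have hs : 0 < Real.sin ω := Real.sin_pos_of_pos_of_lt_pi hω₁ (by linarith)
  -- cos (2ω) ≥ X
  have hcos2 : X ≤ Real.cos (2 * ω) := by
    by_cases hX : -1 ≤ X
    · have hmem1 : 2 * ω ∈ Set.Icc 0 Real.pi := ⟨by linarith, le_of_lt hωpi⟩
      have hmem2 : Real.arccos X ∈ Set.Icc 0 Real.pi :=
        ⟨Real.arccos_nonneg X, Real.arccos_le_pi X⟩
      have hlt : 2 * ω < Real.arccos X := by linarith
      have := Real.strictAntiOn_cos hmem1 hmem2 hlt
      rw [Real.cos_arccos hX hX1.le] at this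
      exact this.le
    · linarith [Real.neg_one_le_cos (2 * ω)]
  have hcos2' : X ≤ Real.cos ω ^ 2 - Real.sin ω ^ 2 := by
    rwa [Real.cos_two_mul'] at hcos2
  -- F = R + 1/R ≥ 2
  have hRinv : R * (1 / R) = 1 := mul_one_div_cancel hR.ne'
  have hF : 2 ≤ R + 1 / R := by nlinarith [sq_nonneg (R - 1), hRinv]
  have hF0 : 0 < R + 1 / R := by linarith
  -- the real-part identity
  have hc2 : Real.cos ω ^ 2 + Real.sin ω ^ 2 = 1 := Real.cos_sq_add_sin_sq ω
  have key := re_key_aux R ω t ξ hR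
  -- rewrite the inner expression using cos²+sin²=1
  have hAc : 2*(R - 1/R)^2*Real.cos ω^2 + ξ + 2 + (R + 1/R)^2*Real.cos ω^2
      - (R - 1/R)^2*Real.sin ω^2
      = ξ + (R + 1/R)^2 + (2*(R + 1/R)^2 - 6) * (Real.cos ω^2 - Real.sin ω^2) := by
    linear_combination ((R + 1/R)^2 - 2) * hc2
      + (-8 * Real.cos ω^2 + 4 * Real.sin ω^2) * hRinv
  -- key inequality for the bracket
  have hE : (R + 1/R) * (2 - a) / 6
      ≤ ξ + (R + 1/R)^2 + (2*(R + 1/R)^2 - 6) * (Real.cos ω^2 - Real.sin ω^2) := by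
    have h1 : (2*(R + 1/R)^2 - 6) * X ≤ (2*(R + 1/R)^2 - 6) * (Real.cos ω^2 - Real.sin ω^2) :=
      mul_le_mul_of_nonneg_left hcos2' (by nlinarith)
    have h2 : 0 ≤ ((R + 1/R)^2 - 4) * (1 - 6*ξ - a/2) :=
      mul_nonneg (by nlinarith) (by linarith)
    have h3 : 0 ≤ ((R + 1/R)^2 - 2*(R + 1/R)) * (2 - a) :=
      mul_nonneg (by nlinarith) (by linarith)
    rw [hX_def] at h1
    linarith [h1, h2, h3]
  rw [key, hAc]
  have hts : 0 < t * Real.sin ω * (R + 1/R) := by positivity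
  have h := mul_le_mul_of_nonneg_left hE hts.le
  calc -(t * (R + 1/R) * Real.sin ω
        * (ξ + (R + 1/R)^2 + (2*(R + 1/R)^2 - 6) * (Real.cos ω^2 - Real.sin ω^2)))
      = -(t * Real.sin ω * (R + 1/R)
        * (ξ + (R + 1/R)^2 + (2*(R + 1/R)^2 - 6) * (Real.cos ω^2 - Real.sin ω^2))) := by ring
    _ ≤ -(t * Real.sin ω * (R + 1/R) * ((R + 1/R) * (2 - a) / 6)) := by linarith
    _ = -(1 / 6) * (R + 1 / R) ^ 2 * t * Real.sin ω * (2 - a) := by ring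
end
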